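/- arXiv:0708.2784 — 8 statements merged into one kernel-verified Lean document; each statement's English description precedes it below -/
import Mathlib

section
/- Let $L_1,\dots,L_{d+1}$ be affine lines over $\mathbb{F}_q$ in general position (no three concurrent, and pairwise distinct). Suppose for each $\nu$ with $1 \le \nu \le d+1$ we are given $\nu$ distinct $\mathbb{F}_q$-rational points on $L_{q_\nu} = L_\nu$ that avoid all pairwise intersection points $L_i \cap L_j$. If a polynomial $f \in \mathbb{F}_q[x,y]$ of total degree at most $d$ vanishes at all these $1 + 2 + \cdots + (d+1)$ points, then $f = 0$. -/
/-!
Induction on the number of lines. The last line `ℓ` carries more chosen points than the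
degree of `f`, so the restriction of `f` to `ℓ`, a one-variable polynomial of degree
`≤ deg f`, vanishes identically and the equation of `ℓ` divides `f`. The quotient has
degree one less, and it still vanishes at the points chosen on the other lines because
those avoid `ℓ`.
-/

open MvPolynomial

theorem MvPolynomial.natDegree_aeval_le_totalDegree {R σ : Type*} [CommSemiring R]
    {u : σ → Polynomial R} (hu : ∀ i, (u i).natDegree ≤ 1) (f : MvPolynomial σ R) :
    (aeval u f).natDegree ≤ f.totalDegree := by
  classical
  conv_lhs => rw [f.as_sum, map_sum]
  refine Polynomial.natDegree_sum_le_of_forall_le _ _ fun m hm => ?_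
  rw [aeval_monomial, Polynomial.algebraMap_eq]
  refine (Polynomial.natDegree_C_mul_le _ _).trans <| (Polynomial.natDegree_prod_le _ _).trans ?_
  refine (Finset.sum_le_sum fun i _ => Polynomial.natDegree_pow_le_of_le (m i) (hu i)).trans ?_
  simpa [Finsupp.sum] using le_totalDegree hm

theorem MvPolynomial.dvd_sub_aeval_of_dvd_X_sub {R σ : Type*} [CommRing R]
    {l : MvPolynomial σ R} {g : σ → MvPolynomial σ R} (hg : ∀ i, l ∣ X i - g i)
    (f : MvPolynomial σ R) : l ∣ f - aeval g f := by
  let π := Ideal.Quotient.mkₐ R (Ideal.span {l})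
  have hπ : π.comp (aeval g) = π := by
    ext i
    simpa [π, Ideal.Quotient.eq, Ideal.mem_span_singleton, dvd_sub_comm] using hg i
  rw [← Ideal.mem_span_singleton, ← Ideal.Quotient.eq]
  exact (DFunLike.congr_fun hπ f).symm

section Lines

variable {F : Type*} [Field F]

noncomputable def linePoly (a b c : F) : MvPolynomial (Fin 2) F := C a * X 0 + C b * X 1 + C c

@[simp] theorem eval_linePoly (a b c : F) (v : Fin 2 → F) :
    eval v (linePoly a b c) = a * v 0 + b * v 1 + c := by simp [linePoly]

theorem one_le_totalDegree_linePoly {a b c : F} (hab : (a, b) ≠ (0, 0)) :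
    1 ≤ (linePoly a b c).totalDegree := by
  by_contra! h
  have hC := totalDegree_eq_zero_iff_eq_C.mp (Nat.lt_one_iff.mp h)
  have h0 := congrArg (eval ![0, 0]) hC
  have h1 := congrArg (eval ![1, 0]) hC
  have h2 := congrArg (eval ![0, 1]) hC
  simp only [eval_linePoly, eval_C, Matrix.cons_val_zero, Matrix.cons_val_one,
    Matrix.cons_val_fin_one, mul_zero, mul_one, add_zero, zero_add] at h0 h1 h2
  exact hab (Prod.ext (by linear_combination h1 - h0) (by linear_combination h2 - h0))

theorem totalDegree_linePoly_mul {a b c : F} (hab : (a, b) ≠ (0, 0))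
    {h : MvPolynomial (Fin 2) F} (hh : h ≠ 0) :
    (linePoly a b c * h).totalDegree = (linePoly a b c).totalDegree + h.totalDegree := by
  refine totalDegree_mul_of_isDomain (fun hl => ?_) hh
  simpa [hl] using one_le_totalDegree_linePoly (c := c) hab

theorem exists_mul_add_mul_eq_one {a b : F} (hab : (a, b) ≠ (0, 0)) :
    ∃ a' b' : F, a * a' + b * b' = 1 := by
  by_cases ha : a = 0
  · have hb : b ≠ 0 := fun hb => hab (by rw [ha, hb])
    exact ⟨0, b⁻¹, by simp [hb]⟩
  · exact ⟨a⁻¹, 0, by simp [ha]⟩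

section LineParam

variable {a b c a' b' : F}

/-- When `a * a' + b * b' = 1`, this parametrizes the line `a x + b y + c = 0` through the
point `(-c a', -c b')` in direction `(-b, a)`; the parameter of a point `(x, y)` of the line
is `a' y - b' x`. -/
noncomputable def lineParam (a b c a' b' : F) : Fin 2 → Polynomial F :=
  ![.C (-b) * .X + .C (-c * a'), .C a * .X + .C (-c * b')]

theorem natDegree_lineParam_le (i : Fin 2) : (lineParam a b c a' b' i).natDegree ≤ 1 := by
  fin_cases i <;> exact Polynomial.natDegree_linear_le

theorem eval_lineParam (hab' : a * a' + b * b' = 1) {x y : F} (hxy : a * x + b * y + c = 0) :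
    (fun i => (lineParam a b c a' b' i).eval (a' * y - b' * x)) = ![x, y] := by
  ext i
  fin_cases i
  · simp only [lineParam, Fin.zero_eta, Matrix.cons_val_zero, Polynomial.eval_add,
      Polynomial.eval_mul, Polynomial.eval_C, Polynomial.eval_X]
    linear_combination (-a') * hxy + x * hab'
  · simp only [lineParam, Fin.mk_one, Matrix.cons_val_one, Matrix.cons_val_fin_one,
      Polynomial.eval_add, Polynomial.eval_mul, Polynomial.eval_C, Polynomial.eval_X]
    linear_combination (-b') * hxy + y * hab'

theorem linePoly_dvd_X_sub_aeval_lineParam (hab' : a * a' + b * b' = 1) (i : Fin 2) :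
    linePoly a b c ∣
      X i - Polynomial.aeval (C a' * X 1 - C b' * X 0) (lineParam a b c a' b' i) := by
  have hC : C a * C a' + C b * C b' = (1 : MvPolynomial (Fin 2) F) := by
    rw [← C_mul, ← C_mul, ← C_add, hab', C_1]
  fin_cases i
  · refine ⟨C a', ?_⟩
    simp only [lineParam, linePoly, Fin.zero_eta, Matrix.cons_val_zero, Polynomial.aeval_add,
      Polynomial.aeval_C, algebraMap_eq, Polynomial.aeval_X, map_mul, map_neg]
    linear_combination (-X 0) * hC
  · refine ⟨C b', ?_⟩
    simp only [lineParam, linePoly, Fin.mk_one, Matrix.cons_val_one, Matrix.cons_val_fin_one,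
      Polynomial.aeval_add, Polynomial.aeval_C, algebraMap_eq, Polynomial.aeval_X, map_mul, map_neg]
    linear_combination (-X 1) * hC

end LineParam

theorem linePoly_dvd_of_eval_eq_zero {ι : Type*} [Fintype ι] {a b c : F} (hab : (a, b) ≠ (0, 0))
    {p : ι → F × F} (hp : Function.Injective p)
    (hon : ∀ k, a * (p k).1 + b * (p k).2 + c = 0)
    {f : MvPolynomial (Fin 2) F} (hf : f.totalDegree < Fintype.card ι)
    (hz : ∀ k, eval ![(p k).1, (p k).2] f = 0) : linePoly a b c ∣ f := by
  obtain ⟨a', b', hab'⟩ := exists_mul_add_mul_eq_one hab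
  let u := lineParam a b c a' b'
  let t : ι → F := fun k => a' * (p k).2 - b' * (p k).1
  have hut : ∀ k, (fun i => (u i).eval (t k)) = ![(p k).1, (p k).2] :=
    fun k => eval_lineParam hab' (hon k)
  have hrestr : aeval u f = 0 := by
    refine Polynomial.eq_zero_of_natDegree_lt_card_of_eval_eq_zero _ (f := t) ?_ ?_ ?_
    · intro k l hkl
      have := hut l
      rw [← hkl, hut k] at this
      exact hp (by simpa [Prod.ext_iff] using this)
    · intro k
      rw [← Polynomial.coe_aeval_eq_eval, comp_aeval_apply, ← hz k, ← hut k]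
      rfl
    · exact (natDegree_aeval_le_totalDegree natDegree_lineParam_le f).trans_lt hf
  -- Modulo `linePoly a b c` we have `X i ≡ u i (w)` for `w = a' X 1 - b' X 0`,
  -- hence `f ≡ (aeval u f)(w) = 0`.
  have := dvd_sub_aeval_of_dvd_X_sub (linePoly_dvd_X_sub_aeval_lineParam (c := c) hab') f
  rwa [← comp_aeval_apply, hrestr, map_zero, sub_zero] at this

theorem eq_zero_of_eval_eq_zero_on_lines (n : ℕ) (a b c : Fin n → F)
    (hab : ∀ i, (a i, b i) ≠ (0, 0))
    (P : (ν : Fin n) → Fin (ν.1 + 1) → F × F)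
    (hPinj : ∀ ν, Function.Injective (P ν))
    (hPon : ∀ ν k, a ν * (P ν k).1 + b ν * (P ν k).2 + c ν = 0)
    (hPavoid : ∀ ν k j, j ≠ ν → a j * (P ν k).1 + b j * (P ν k).2 + c j ≠ 0)
    (f : MvPolynomial (Fin 2) F) (hf : f.totalDegree < n)
    (hz : ∀ ν k, eval ![(P ν k).1, (P ν k).2] f = 0) :
    f = 0 := by
  induction n generalizing f with
  | zero => omega
  | succ n ih =>
    let ℓ := Fin.last n
    obtain ⟨h, rfl⟩ : linePoly (a ℓ) (b ℓ) (c ℓ) ∣ f :=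
      linePoly_dvd_of_eval_eq_zero (hab ℓ) (hPinj ℓ) (hPon ℓ) (by simpa [ℓ] using hf)
        (hz ℓ)
    rcases eq_or_ne h 0 with rfl | hh
    · exact mul_zero _
    have hdeg : h.totalDegree < n := by
      have := one_le_totalDegree_linePoly (c := c ℓ) (hab ℓ)
      rw [totalDegree_linePoly_mul (hab ℓ) hh] at hf
      omega
    suffices h = 0 by rw [this, mul_zero]
    refine ih (fun i => a i.castSucc) (fun i => b i.castSucc) (fun i => c i.castSucc)
      (fun i => hab _) (fun ν => P ν.castSucc) (fun ν => hPinj _) (fun ν => hPon ν.castSucc)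
      (fun ν k j hj => hPavoid _ k _ (Fin.castSucc_injective n |>.ne hj)) h hdeg
      fun ν k => ?_
    have hfz := hz ν.castSucc k
    rw [map_mul, mul_eq_zero, eval_linePoly] at hfz
    exact hfz.resolve_left (by simpa using hPavoid _ k ℓ (Fin.castSucc_lt_last ν).ne')

end Lines

theorem stmt_2_general {F : Type*} [Field F] (d : ℕ)
    (a b c : Fin (d + 1) → F) (hab : ∀ i, (a i, b i) ≠ (0, 0))
    (P : (ν : Fin (d + 1)) → Fin (ν.1 + 1) → F × F)
    (hPinj : ∀ ν, Function.Injective (P ν))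
    (hPon : ∀ ν k, a ν * (P ν k).1 + b ν * (P ν k).2 + c ν = 0)
    (hPavoid : ∀ ν k j, j ≠ ν → a j * (P ν k).1 + b j * (P ν k).2 + c j ≠ 0)
    (f : MvPolynomial (Fin 2) F) (hf : f.totalDegree ≤ d)
    (hz : ∀ ν k, MvPolynomial.eval ![(P ν k).1, (P ν k).2] f = 0) :
    f = 0 :=
  eq_zero_of_eval_eq_zero_on_lines (d + 1) a b c hab P hPinj hPon hPavoid f
    (Nat.lt_succ_of_le hf) hz

/-- If `d+1` affine lines are in general position (pairwise distinct, no
three concurrent) and on the `ν`-th line we choose `ν` distinct rational points avoiding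
all intersection points, then any polynomial of total degree at most `d` vanishing at all
these points is zero. -/
theorem stmt_2 {F : Type*} [Field F] (d : ℕ)
    (a b c : Fin (d + 1) → F) (hab : ∀ i, (a i, b i) ≠ (0, 0))
    (hdist : ∀ i j : Fin (d + 1), i ≠ j →
      {p : F × F | a i * p.1 + b i * p.2 + c i = 0} ≠
        {p : F × F | a j * p.1 + b j * p.2 + c j = 0})
    (hgen : ∀ i j k : Fin (d + 1), i ≠ j → i ≠ k → j ≠ k →
      ¬∃ p : F × F, a i * p.1 + b i * p.2 + c i = 0 ∧
        a j * p.1 + b j * p.2 + c j = 0 ∧ a k * p.1 + b k * p.2 + c k = 0)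
    (P : (ν : Fin (d + 1)) → Fin (ν.1 + 1) → F × F)
    (hPinj : ∀ ν, Function.Injective (P ν))
    (hPon : ∀ ν k, a ν * (P ν k).1 + b ν * (P ν k).2 + c ν = 0)
    (hPavoid : ∀ ν k j, j ≠ ν → a j * (P ν k).1 + b j * (P ν k).2 + c j ≠ 0)
    (f : MvPolynomial (Fin 2) F) (hf : f.totalDegree ≤ d)
    (hz : ∀ ν k, MvPolynomial.eval ![(P ν k).1, (P ν k).2] f = 0) :
    f = 0 :=
  stmt_2_general d a b c hab P hPinj hPon hPavoid f hf hz
end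

section
/- With the hypotheses of the previous statement (an effective set $\mathcal{Q}$ of $\delta = (d+1)(d+2)/2$ points arranged with $\nu$ points on the $\nu$-th of $d+1$ lines in general position, avoiding intersection points), the evaluation map $e_{\mathcal{Q}} : \mathcal{F}_d \to \mathbb{F}_q^{\mathcal{Q}}$, $f \mapsto (f(P))_{P \in \mathcal{Q}}$, is a linear isomorphism. -/
open MvPolynomial Finset Module

/-! For the `k`-th point of the `ν`-th line, multiply the `d - ν` lines after the `ν`-th by `ν`
linear forms separating the point from the other points of its own line. The result has degree
`≤ d`, does not vanish at the point, and vanishes at every other point of lines `ν, …, d`; these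
evaluation vectors are triangular, so evaluation is onto `F^Q`. As `dim F_d ≤ |Q|`, it is bijective. -/

theorem linearIndependent_of_triangular {R ι α : Type*} [Ring R] [NoZeroDivisors R]
    [Fintype ι] [LinearOrder α] [WellFoundedGT α] (r : ι → α) (v : ι → ι → R)
    (hdiag : ∀ i, v i i ≠ 0) (hzero : ∀ i j, i ≠ j → r i ≤ r j → v i j = 0) :
    LinearIndependent R v := by
  rw [Fintype.linearIndependent_iff]
  intro w hw j
  induction hj : r j using WellFoundedGT.induction generalizing j with
  | ind a ih =>
    have hsum : ∑ i, w i * v i j = 0 := by simpa using congrFun hw j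
    rw [Finset.sum_eq_single j (fun i _ hij => ?_) (by simp)] at hsum
    · exact (mul_eq_zero.mp hsum).resolve_right (hdiag j)
    rcases le_or_gt (r i) (r j) with hle | hlt
    · rw [hzero i j hij hle, mul_zero]
    · rw [ih (r i) (hj ▸ hlt) i rfl, zero_mul]

theorem LinearMap.bijective_of_linearIndependent_comp {K V ι : Type*} [Field K] [AddCommGroup V]
    [Module K V] [FiniteDimensional K V] [Fintype ι] (f : V →ₗ[K] ι → K) {u : ι → V}
    (hu : LinearIndependent K (f ∘ u)) (hdim : finrank K V ≤ Fintype.card ι) :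
    Function.Bijective f := by
  have hcard : Fintype.card ι = finrank K (ι → K) := (finrank_fintype_fun_eq_card K).symm
  have hsurj : Function.Surjective f := by
    rw [← LinearMap.range_eq_top, eq_top_iff, ← hu.span_eq_top_of_card_eq_finrank' hcard,
      Submodule.span_le, Set.range_comp]
    exact Set.image_subset_range _ _
  have hfinrank : finrank K V = finrank K (ι → K) :=
    le_antisymm (hdim.trans hcard.le) (LinearMap.finrank_le_finrank_of_surjective hsurj)
  exact ⟨(LinearMap.injective_iff_surjective_of_finrank_eq_finrank hfinrank).mpr hsurj, hsurj⟩

namespace MvPolynomial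

theorem exists_totalDegree_le_card_eval_eq_zero {σ R : Type*} [CommRing R] [IsDomain R]
    (s : Finset (σ → R)) {x : σ → R} (hx : x ∉ s) :
    ∃ f : MvPolynomial σ R, f.totalDegree ≤ #s ∧ (∀ y ∈ s, eval y f = 0) ∧ eval x f ≠ 0 := by
  classical
  induction s using Finset.induction_on with
  | empty => exact ⟨1, by simp, by simp, by simp⟩
  | insert y s hy ih =>
    obtain ⟨hxy, hxs⟩ := not_or.mp (Finset.mem_insert.not.mp hx)
    obtain ⟨f, hfdeg, hfs, hfx⟩ := ih hxs
    obtain ⟨i, hi⟩ := Function.ne_iff.mp hxy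
    refine ⟨f * (X i - C (y i)), ?_, ?_, ?_⟩
    · have hlin : (X i - C (y i) : MvPolynomial σ R).totalDegree ≤ 1 :=
        (totalDegree_sub _ _).trans (by simp)
      rw [card_insert_of_notMem hy]
      exact (totalDegree_mul _ _).trans (add_le_add hfdeg hlin)
    · intro z hz
      rcases Finset.mem_insert.mp hz with rfl | hz
      · simp
      · simp [hfs z hz]
    · simpa [sub_eq_zero] using ⟨hfx, hi⟩

theorem finrank_restrictTotalDegree_fin_two_le (K : Type*) [Field K] (d : ℕ) :
    finrank K (restrictTotalDegree (Fin 2) K d) ≤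
      Fintype.card (Σ ν : Fin (d + 1), Fin (ν.1 + 1)) := by
  rw [restrictTotalDegree, finrank_eq_nat_card_basis (basisRestrictSupport K _),
    ← Nat.card_eq_fintype_card]
  have hdeg (n : Fin 2 →₀ ℕ) : (n.sum fun _ e => e) = n 0 + n 1 := by
    rw [Finsupp.sum_fintype _ _ (fun _ => rfl), Fin.sum_univ_two]
  let φ : {n : Fin 2 →₀ ℕ | (n.sum fun _ e => e) ≤ d} → Σ ν : Fin (d + 1), Fin (ν.1 + 1) :=
    fun n => ⟨⟨n.1 0 + n.1 1, by have := n.2; simp only [Set.mem_ofPred_eq, hdeg] at this; omega⟩,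
      ⟨n.1 0, Nat.lt_succ_of_le (Nat.le_add_right _ _)⟩⟩
  refine Nat.card_le_card_of_injective φ fun n m h => Subtype.ext (Finsupp.ext fun i => ?_)
  have h₁ : n.1 0 + n.1 1 = m.1 0 + m.1 1 := congrArg (fun s => s.1.1) h
  have h₀ : n.1 0 = m.1 0 := congrArg (fun s => s.2.1) h
  fin_cases i
  · exact h₀
  · show n.1 1 = m.1 1
    omega

end MvPolynomial

section EffectiveSet

variable {F : Type*} [Field F] {d : ℕ} {a b c : Fin (d + 1) → F}
  {P : (ν : Fin (d + 1)) → Fin (ν.1 + 1) → F × F}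

theorem exists_triangular_interpolant (hPinj : ∀ ν, Function.Injective (P ν))
    (hPon : ∀ ν k, a ν * (P ν k).1 + b ν * (P ν k).2 + c ν = 0)
    (hPavoid : ∀ ν k j, j ≠ ν → a j * (P ν k).1 + b j * (P ν k).2 + c j ≠ 0)
    (s : Σ ν : Fin (d + 1), Fin (ν.1 + 1)) :
    ∃ g : MvPolynomial (Fin 2) F, g.totalDegree ≤ d ∧
      eval ![(P s.1 s.2).1, (P s.1 s.2).2] g ≠ 0 ∧
      ∀ t : Σ ν : Fin (d + 1), Fin (ν.1 + 1), t ≠ s → s.1 ≤ t.1 →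
        eval ![(P t.1 t.2).1, (P t.1 t.2).2] g = 0 := by
  classical
  obtain ⟨ν, k⟩ := s
  have hpt : Function.Injective fun p : F × F => ![p.1, p.2] := (finTwoArrowEquiv F).symm.injective
  obtain ⟨f, hfdeg, hf, hfk⟩ := exists_totalDegree_le_card_eval_eq_zero
    ((univ.erase k).image fun l => ![(P ν l).1, (P ν l).2]) (x := ![(P ν k).1, (P ν k).2])
    (by
      rintro hk
      obtain ⟨l, hl, hlk⟩ := mem_image.mp hk
      exact (mem_erase.mp hl).1 (hpt.comp (hPinj ν) hlk))
  let ℓ (j : Fin (d + 1)) : MvPolynomial (Fin 2) F := C (a j) * X 0 + C (b j) * X 1 + C (c j)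
  have hℓdeg (j) : (ℓ j).totalDegree ≤ 1 := by
    refine (totalDegree_add _ _).trans (max_le ((totalDegree_add _ _).trans (max_le ?_ ?_)) ?_) <;>
      first | exact (totalDegree_mul _ _).trans (by simp) | simp
  have hℓ (j) (p : F × F) : eval ![p.1, p.2] (ℓ j) = a j * p.1 + b j * p.2 + c j := by simp [ℓ]
  refine ⟨(∏ j ∈ univ.filter (ν < ·), ℓ j) * f, ?_, ?_, ?_⟩
  · calc ((∏ j ∈ univ.filter (ν < ·), ℓ j) * f).totalDegree
          ≤ (∏ j ∈ univ.filter (ν < ·), ℓ j).totalDegree + f.totalDegree := totalDegree_mul _ _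
      _ ≤ #(univ.filter (ν < ·)) • 1 + #(univ.erase k) :=
          add_le_add ((totalDegree_finsetProd _ _).trans (sum_le_card_nsmul _ _ _ fun j _ => hℓdeg j))
            (hfdeg.trans card_image_le)
      _ = d := by
          rw [smul_eq_mul, mul_one, filter_lt_eq_Ioi, Fin.card_Ioi, card_erase_of_mem (mem_univ _),
            card_univ, Fintype.card_fin]
          omega
  · rw [map_mul, map_prod]
    refine mul_ne_zero (prod_ne_zero_iff.mpr fun j hj => ?_) hfk
    rw [hℓ]
    exact hPavoid ν k j (mem_filter.mp hj).2.ne'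
  · rintro ⟨μ, l⟩ hne (hle : ν ≤ μ)
    rcases hle.lt_or_eq with hlt | rfl
    · rw [map_mul, map_prod]
      refine mul_eq_zero_of_left (prod_eq_zero (mem_filter.mpr ⟨mem_univ _, hlt⟩) ?_) _
      rw [hℓ]
      exact hPon μ l
    · rw [map_mul]
      refine mul_eq_zero_of_right _ (hf _ (mem_image_of_mem _ (mem_erase.mpr ⟨?_, mem_univ _⟩)))
      rintro rfl
      exact hne rfl

end EffectiveSet

theorem stmt_3_general {F : Type*} [Field F] (d : ℕ)
    (a b c : Fin (d + 1) → F)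
    (P : (ν : Fin (d + 1)) → Fin (ν.1 + 1) → F × F)
    (hPinj : ∀ ν, Function.Injective (P ν))
    (hPon : ∀ ν k, a ν * (P ν k).1 + b ν * (P ν k).2 + c ν = 0)
    (hPavoid : ∀ ν k j, j ≠ ν → a j * (P ν k).1 + b j * (P ν k).2 + c j ≠ 0) :
    Function.Bijective
      (fun f : MvPolynomial.restrictTotalDegree (Fin 2) F d =>
        (fun s : Σ ν : Fin (d + 1), Fin (ν.1 + 1) =>
          MvPolynomial.eval ![(P s.1 s.2).1, (P s.1 s.2).2]
            (f : MvPolynomial (Fin 2) F))) := by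
  choose g hgdeg hgs hgt using exists_triangular_interpolant hPinj hPon hPavoid
  let e : restrictTotalDegree (Fin 2) F d →ₗ[F] (Σ ν : Fin (d + 1), Fin (ν.1 + 1)) → F :=
    LinearMap.pi fun s => (aeval ![(P s.1 s.2).1, (P s.1 s.2).2]).toLinearMap ∘ₗ Submodule.subtype _
  exact e.bijective_of_linearIndependent_comp
    (u := fun s => ⟨g s, (mem_restrictTotalDegree _ _ _).mpr (hgdeg s)⟩)
    (linearIndependent_of_triangular Sigma.fst _ hgs fun s t hst => hgt s t hst.symm)
    (finrank_restrictTotalDegree_fin_two_le F d)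

/-- Under the hypotheses of Statement 2, the evaluation map
`e_Q : F_d → F^Q`, `f ↦ (f(P))_{P ∈ Q}`, from the space of polynomials of total
degree at most `d` to functions on the effective set `Q`, is a (linear) isomorphism. -/
theorem stmt_3 {F : Type*} [Field F] (d : ℕ)
    (a b c : Fin (d + 1) → F) (hab : ∀ i, (a i, b i) ≠ (0, 0))
    (hdist : ∀ i j : Fin (d + 1), i ≠ j →
      {p : F × F | a i * p.1 + b i * p.2 + c i = 0} ≠
        {p : F × F | a j * p.1 + b j * p.2 + c j = 0})
    (hgen : ∀ i j k : Fin (d + 1), i ≠ j → i ≠ k → j ≠ k →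
      ¬∃ p : F × F, a i * p.1 + b i * p.2 + c i = 0 ∧
        a j * p.1 + b j * p.2 + c j = 0 ∧ a k * p.1 + b k * p.2 + c k = 0)
    (P : (ν : Fin (d + 1)) → Fin (ν.1 + 1) → F × F)
    (hPinj : ∀ ν, Function.Injective (P ν))
    (hPon : ∀ ν k, a ν * (P ν k).1 + b ν * (P ν k).2 + c ν = 0)
    (hPavoid : ∀ ν k j, j ≠ ν → a j * (P ν k).1 + b j * (P ν k).2 + c j ≠ 0) :
    Function.Bijective
      (fun f : MvPolynomial.restrictTotalDegree (Fin 2) F d =>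
        (fun s : Σ ν : Fin (d + 1), Fin (ν.1 + 1) =>
          MvPolynomial.eval ![(P s.1 s.2).1, (P s.1 s.2).2]
            (f : MvPolynomial (Fin 2) F))) :=
  stmt_3_general d a b c P hPinj hPon hPavoid
end

section
/- Let $L_1,\dots,L_n$ be affine lines over $\mathbb{F}_q$ in general position, let $d < \min(m,n)$, and for each $i$ choose $m$ distinct $\mathbb{F}_q$-rational points $P_{i1},\dots,P_{im}$ on $L_i$, all distinct and avoiding all intersection points of the lines. Then the evaluation map $e : \mathcal{F}_d \to \mathbb{F}_q^{nm}$, $f \mapsto (f(P_{ij}))_{i,j}$, is injective; in particular the resulting linear code has dimension $(d+1)(d+2)/2$. -/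
/-!
Induction on the number `k` of lines used. If `f` has total degree `< k` and vanishes at the
marked points of the first `k` lines, its restriction to line `k - 1` is a univariate polynomial
of degree `< k ≤ m` with `m` roots, hence zero, so the equation `ℓ` of that line divides `f`.
The cofactor `f / ℓ` has degree `< k - 1`, and it still vanishes at the marked points of the
first `k - 1` lines because these avoid line `k - 1`.

The dimension is the number of monomials of degree `≤ d`, i.e. `∑_{j ≤ d} (j + 1)`.
-/

open MvPolynomial Finset Function

namespace MvPolynomial

section CommRing

variable {R σ : Type*} [CommRing R]

theorem dvd_sub_aeval_of_forall_dvd_X_sub {q : MvPolynomial σ R} {x : σ → MvPolynomial σ R}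
    (hx : ∀ k, q ∣ X k - x k) (f : MvPolynomial σ R) : q ∣ f - aeval x f := by
  have hmk : (Ideal.Quotient.mkₐ R (Ideal.span {q})).comp (aeval x) =
      Ideal.Quotient.mkₐ R (Ideal.span {q}) := by
    ext k
    simpa [Ideal.Quotient.eq, Ideal.mem_span_singleton, dvd_sub_comm] using hx k
  rw [← Ideal.mem_span_singleton, ← Ideal.Quotient.eq, ← Ideal.Quotient.mkₐ_eq_mk R,
    ← AlgHom.comp_apply, hmk]

theorem polynomial_eval_aeval (γ : σ → Polynomial R) (f : MvPolynomial σ R) (y : R) :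
    (aeval γ f).eval y = eval (fun k => (γ k).eval y) f := by
  rw [← Polynomial.coe_aeval_eq_eval, comp_aeval_apply]
  rfl

variable (σ R) in
theorem finrank_restrictTotalDegree [Nontrivial R] [Fintype σ] (d : ℕ) :
    Module.finrank R (restrictTotalDegree σ R d) =
      (d + Fintype.card σ).choose (Fintype.card σ) := by
  classical
  set A : ℕ → Finset (σ →₀ ℕ) := fun j => (univ : Finset σ).finsuppAntidiag j
  set S : Finset (σ →₀ ℕ) := (range (d + 1)).biUnion A
  have hS : {s : σ →₀ ℕ | (s.sum fun _ e => e) ≤ d} = S := by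
    ext s
    simp [S, A, Finsupp.sum_fintype]
  have hdisj : (range (d + 1) : Set ℕ).PairwiseDisjoint A :=
    fun j _ j' _ hjj' => disjoint_left.mpr fun s hs hs' => hjj' (by
      simp only [A, mem_finsuppAntidiag] at hs hs'; rw [← hs.1, ← hs'.1])
  rw [restrictTotalDegree, Module.finrank_eq_nat_card_basis (basisRestrictSupport R _), hS,
    Nat.card_coe_set_eq, Set.ncard_coe_finset, card_biUnion hdisj, ← Nat.sum_range_multichoose]
  simp [A, card_finsuppAntidiag_nat_eq_multichoose]

noncomputable def affineForm (a b c : R) : MvPolynomial (Fin 2) R := C a * X 0 + C b * X 1 + C c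

@[simp]
theorem eval_affineForm (a b c x y : R) : eval ![x, y] (affineForm a b c) = a * x + b * y + c := by
  simp [affineForm]

end CommRing

section IsDomain

variable {R σ : Type*} [CommRing R] [IsDomain R]

theorem aeval_eq_zero_of_totalDegree_mul_lt_card {e : ℕ} (f : MvPolynomial σ R)
    (γ : σ → Polynomial R) (hγ : ∀ k, (γ k).natDegree ≤ e) {ι : Type*} [Fintype ι]
    {t : ι → R} (ht : Injective t) (hev : ∀ j, eval (fun k => (γ k).eval (t j)) f = 0)
    (hcard : f.totalDegree * e < Fintype.card ι) : aeval γ f = 0 :=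
  Polynomial.eq_zero_of_natDegree_lt_card_of_eval_eq_zero _ ht
    (fun j => (polynomial_eval_aeval γ f (t j)).trans (hev j))
    ((aeval_natDegree_le f le_rfl γ hγ).trans_lt hcard)

/-- `γ` parametrizes the curve `q = 0` with parameter `z`: modulo `q`, every coordinate `X k`
equals `γ k (z)`, so `f ≡ (f ∘ γ)(z)`, and `f ∘ γ` vanishes by counting roots. -/
theorem dvd_of_eval_eq_zero_on_curve {e : ℕ} {q : MvPolynomial σ R} (γ : σ → Polynomial R)
    (hγ : ∀ k, (γ k).natDegree ≤ e) (z : MvPolynomial σ R)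
    (hq : ∀ k, q ∣ X k - Polynomial.aeval z (γ k)) {ι : Type*} [Fintype ι]
    {pts : ι → σ → R} (hpts : Injective pts) (t : ι → R)
    (hpar : ∀ j, pts j = fun k => (γ k).eval (t j)) (f : MvPolynomial σ R)
    (hev : ∀ j, eval (pts j) f = 0) (hcard : f.totalDegree * e < Fintype.card ι) : q ∣ f := by
  have hrestrict : aeval γ f = 0 := by
    refine aeval_eq_zero_of_totalDegree_mul_lt_card f γ hγ (t := t) ?_ ?_ hcard
    · exact fun j j' h => hpts (by rw [hpar, hpar, h])
    · exact fun j => hpar j ▸ hev j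
  have hsubst : aeval (fun k => Polynomial.aeval z (γ k)) f = 0 := by
    rw [← comp_aeval_apply, hrestrict, map_zero]
  simpa only [hsubst, sub_zero] using dvd_sub_aeval_of_forall_dvd_X_sub hq f

end IsDomain

section Field

variable {F : Type*} [Field F]

theorem affineForm_dvd_of_eval_eq_zero {a b c : F} (hab : (a, b) ≠ (0, 0)) {ι : Type*}
    [Fintype ι] {pts : ι → F × F} (hpts : Injective pts)
    (hon : ∀ j, a * (pts j).1 + b * (pts j).2 + c = 0) (f : MvPolynomial (Fin 2) F)
    (hev : ∀ j, eval ![(pts j).1, (pts j).2] f = 0) (hcard : f.totalDegree < Fintype.card ι) :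
    affineForm a b c ∣ f := by
  have hpts' : Injective fun j => ![(pts j).1, (pts j).2] :=
    (finTwoArrowEquiv F).symm.injective.comp hpts
  have hC {u : F} (hu : u ≠ 0) : C u * C u⁻¹ = (1 : MvPolynomial (Fin 2) F) := by
    rw [← C_mul, mul_inv_cancel₀ hu, C_1]
  rcases ne_or_eq b 0 with hb | hb
  · refine dvd_of_eval_eq_zero_on_curve ![Polynomial.X, -Polynomial.C b⁻¹ *
      (Polynomial.C a * Polynomial.X + Polynomial.C c)] ?_ (X 0) ?_ hpts' (fun j => (pts j).1)
      ?_ f hev (by rwa [mul_one])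
    · intro k; fin_cases k <;> simp; compute_degree!
    · intro k; fin_cases k
      · simp
      · refine ⟨C b⁻¹, ?_⟩
        simp [affineForm]
        linear_combination (-X 1) * hC hb
    · intro j; funext k; fin_cases k
      · simp
      · simp; field_simp; linear_combination hon j
  · have ha : a ≠ 0 := fun ha => hab (by rw [ha, hb])
    refine dvd_of_eval_eq_zero_on_curve ![-Polynomial.C a⁻¹ *
      (Polynomial.C b * Polynomial.X + Polynomial.C c), Polynomial.X] ?_ (X 1) ?_ hpts'
      (fun j => (pts j).2) ?_ f hev (by rwa [mul_one])
    · intro k; fin_cases k <;> simp; compute_degree!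
    · intro k; fin_cases k
      · refine ⟨C a⁻¹, ?_⟩
        simp [affineForm, algebraMap_eq]
        linear_combination (-X 0) * hC ha
      · simp
    · intro j; funext k; fin_cases k
      · simp; field_simp; linear_combination hon j
      · simp

theorem affineForm_ne_C {a b c : F} (hab : (a, b) ≠ (0, 0)) (r : F) :
    affineForm a b c ≠ C r := by
  intro h
  have h₀ := congrArg (eval ![0, 0]) h
  have h₁ := congrArg (eval ![1, 0]) h
  have h₂ := congrArg (eval ![0, 1]) h
  simp only [eval_affineForm, eval_C] at h₀ h₁ h₂
  exact hab (Prod.ext (by linear_combination h₁ - h₀) (by linear_combination h₂ - h₀))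

theorem totalDegree_lt_totalDegree_affineForm_mul {a b c : F} (hab : (a, b) ≠ (0, 0))
    {g : MvPolynomial (Fin 2) F} (hg : g ≠ 0) :
    g.totalDegree < (affineForm a b c * g).totalDegree := by
  have hℓ : (affineForm a b c).totalDegree ≠ 0 :=
    fun h => affineForm_ne_C hab _ (totalDegree_eq_zero_iff_eq_C.mp h)
  rw [totalDegree_mul_of_isDomain (fun h => hℓ (by rw [h, totalDegree_zero])) hg]
  omega

theorem eq_zero_of_eval_eq_zero_on_lines {n m : ℕ} {a b c : Fin n → F}
    (hab : ∀ i, (a i, b i) ≠ (0, 0)) {P : Fin n → Fin m → F × F}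
    (hPinj : ∀ i, Injective (P i)) (hPon : ∀ i j, a i * (P i j).1 + b i * (P i j).2 + c i = 0)
    (hPavoid : ∀ i j i', i' ≠ i → a i' * (P i j).1 + b i' * (P i j).2 + c i' ≠ 0)
    (k : ℕ) (hkn : k ≤ n) (hkm : k ≤ m) (f : MvPolynomial (Fin 2) F) (hf : f.totalDegree < k)
    (hev : ∀ i : Fin n, (i : ℕ) < k → ∀ j, eval ![(P i j).1, (P i j).2] f = 0) : f = 0 := by
  induction k generalizing f with
  | zero => omega
  | succ k ih =>
    set i₀ : Fin n := ⟨k, hkn⟩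
    obtain ⟨g, rfl⟩ := affineForm_dvd_of_eval_eq_zero (hab i₀) (hPinj i₀) (hPon i₀) f
      (hev i₀ k.lt_add_one) (by simpa using hf.trans_le hkm)
    rcases eq_or_ne g 0 with rfl | hg
    · exact mul_zero _
    have hgdeg := (totalDegree_lt_totalDegree_affineForm_mul (hab i₀) hg).trans_le
      (Nat.lt_succ_iff.mp hf)
    suffices g = 0 by rw [this, mul_zero]
    refine ih (by omega) (by omega) g hgdeg fun i hi j => ?_
    have hne : i₀ ≠ i := fun h => by simp [← h, i₀] at hi
    have := hev i (by omega) j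
    rw [eval_mul, eval_affineForm] at this
    exact (mul_eq_zero.mp this).resolve_left (hPavoid i j i₀ hne)

end Field

end MvPolynomial

theorem stmt_4_general {F : Type*} [Field F] (n m d : ℕ) (hdm : d < m) (hdn : d < n)
    (a b c : Fin n → F) (hab : ∀ i, (a i, b i) ≠ (0, 0))
    (P : Fin n → Fin m → F × F)
    (hPinj : Function.Injective (fun q : Fin n × Fin m => P q.1 q.2))
    (hPon : ∀ i j, a i * (P i j).1 + b i * (P i j).2 + c i = 0)
    (hPavoid : ∀ i j i', i' ≠ i → a i' * (P i j).1 + b i' * (P i j).2 + c i' ≠ 0) :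
    Function.Injective
      (fun f : MvPolynomial.restrictTotalDegree (Fin 2) F d =>
        (fun q : Fin n × Fin m =>
          MvPolynomial.eval ![(P q.1 q.2).1, (P q.1 q.2).2]
            (f : MvPolynomial (Fin 2) F))) ∧
    Module.finrank F (MvPolynomial.restrictTotalDegree (Fin 2) F d) =
      (d + 1) * (d + 2) / 2 := by
  refine ⟨fun f₁ f₂ hf => Subtype.ext (sub_eq_zero.mp ?_), ?_⟩
  · have hdeg := (mem_restrictTotalDegree _ _ _).mp (sub_mem f₁.2 f₂.2)
    refine eq_zero_of_eval_eq_zero_on_lines hab (fun i => hPinj.comp (Prod.mk_right_injective i))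
      hPon hPavoid (d + 1) hdn hdm _ (Nat.lt_succ_of_le hdeg) fun i _ j => ?_
    rw [map_sub, sub_eq_zero]
    exact congrFun hf (i, j)
  · rw [finrank_restrictTotalDegree, Fintype.card_fin, Nat.choose_two_right, mul_comm]
    rfl

/-- For `n` lines in general position with `m` marked distinct rational
points on each (avoiding intersection points) and `d < min(m,n)`, the evaluation map
`e : F_d → F^{nm}` is injective; in particular the code has dimension `(d+1)(d+2)/2`. -/
theorem stmt_4 {F : Type*} [Field F] (n m d : ℕ) (hdm : d < m) (hdn : d < n)
    (a b c : Fin n → F) (hab : ∀ i, (a i, b i) ≠ (0, 0))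
    (hdist : ∀ i j : Fin n, i ≠ j →
      {p : F × F | a i * p.1 + b i * p.2 + c i = 0} ≠
        {p : F × F | a j * p.1 + b j * p.2 + c j = 0})
    (hgen : ∀ i j k : Fin n, i ≠ j → i ≠ k → j ≠ k →
      ¬∃ p : F × F, a i * p.1 + b i * p.2 + c i = 0 ∧
        a j * p.1 + b j * p.2 + c j = 0 ∧ a k * p.1 + b k * p.2 + c k = 0)
    (P : Fin n → Fin m → F × F)
    (hPinj : Function.Injective (fun q : Fin n × Fin m => P q.1 q.2))
    (hPon : ∀ i j, a i * (P i j).1 + b i * (P i j).2 + c i = 0)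
    (hPavoid : ∀ i j i', i' ≠ i → a i' * (P i j).1 + b i' * (P i j).2 + c i' ≠ 0) :
    Function.Injective
      (fun f : MvPolynomial.restrictTotalDegree (Fin 2) F d =>
        (fun q : Fin n × Fin m =>
          MvPolynomial.eval ![(P q.1 q.2).1, (P q.1 q.2).2]
            (f : MvPolynomial (Fin 2) F))) ∧
    Module.finrank F (MvPolynomial.restrictTotalDegree (Fin 2) F d) =
      (d + 1) * (d + 2) / 2 :=
  stmt_4_general n m d hdm hdn a b c hab P hPinj hPon hPavoid
end

section
/- The number of effective sets for parameters $n, m, d$ equals $\prod_{i=0}^{d} (n-i)\binom{m}{d+1-i}$. -/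
/-- A subset `Q` of the `n × m` grid is *effective* if there are `d+1` distinct rows
`q 0, …, q d` such that `Q` meets row `q ν` in exactly `ν+1` points and meets no
other row. -/
def IsEffective (n m d : ℕ) (Q : Finset (Fin n × Fin m)) : Prop :=
  ∃ q : Fin (d + 1) → Fin n, Function.Injective q ∧
    (∀ ν : Fin (d + 1), (Q.filter (fun p => p.1 = q ν)).card = ν.1 + 1) ∧
    (∀ p ∈ Q, ∃ ν, p.1 = q ν)

namespace EffectiveAux

open Finset

variable {n m d : ℕ}

/-- The forward map building an effective set from a row embedding and column sets. -/
def Fmap (q : Fin (d + 1) ↪ Fin n)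
    (S : ∀ ν : Fin (d + 1), {s : Finset (Fin m) // s.card = ν.1 + 1}) :
    Finset (Fin n × Fin m) :=
  Finset.univ.biUnion fun ν => ((S ν : Finset (Fin m))).image fun x => (q ν, x)

lemma mem_Fmap {q : Fin (d + 1) ↪ Fin n}
    {S : ∀ ν : Fin (d + 1), {s : Finset (Fin m) // s.card = ν.1 + 1}}
    {p : Fin n × Fin m} :
    p ∈ Fmap q S ↔ ∃ ν, p.1 = q ν ∧ p.2 ∈ (S ν : Finset (Fin m)) := by
  constructor
  · intro hp
    simp only [Fmap, Finset.mem_biUnion, Finset.mem_image, Finset.mem_univ, true_and] at hp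
    obtain ⟨ν, x, hx, hxp⟩ := hp
    exact ⟨ν, by simp [← hxp], by simp [← hxp, hx]⟩
  · rintro ⟨ν, h1, h2⟩
    simp only [Fmap, Finset.mem_biUnion, Finset.mem_image, Finset.mem_univ, true_and]
    exact ⟨ν, p.2, h2, by rw [← h1]⟩

lemma filter_Fmap (q : Fin (d + 1) ↪ Fin n)
    (S : ∀ ν : Fin (d + 1), {s : Finset (Fin m) // s.card = ν.1 + 1}) (ν : Fin (d + 1)) :
    (Fmap q S).filter (fun p => p.1 = q ν) =
      ((S ν : Finset (Fin m))).image fun x => (q ν, x) := by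
  ext p
  simp only [Finset.mem_filter, mem_Fmap, Finset.mem_image]
  constructor
  · rintro ⟨⟨μ, h1, h2⟩, h3⟩
    have : μ = ν := q.injective (by rw [← h1, h3])
    subst this
    exact ⟨p.2, h2, by rw [← h3]⟩
  · rintro ⟨x, hx, hxp⟩
    exact ⟨⟨ν, by simp [← hxp], by simp [← hxp, hx]⟩, by simp [← hxp]⟩

lemma Fmap_effective (q : Fin (d + 1) ↪ Fin n)
    (S : ∀ ν : Fin (d + 1), {s : Finset (Fin m) // s.card = ν.1 + 1}) :
    IsEffective n m d (Fmap q S) := by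
  refine ⟨q, q.injective, fun ν => ?_, fun p hp => ?_⟩
  · rw [filter_Fmap, Finset.card_image_of_injective _ (fun a b h => by
      simpa using (Prod.ext_iff.mp h).2)]
    exact (S ν).2
  · obtain ⟨ν, h1, _⟩ := mem_Fmap.mp hp
    exact ⟨ν, h1⟩

lemma Fmap_injective : Function.Injective
    (fun x : (Fin (d + 1) ↪ Fin n) ×
        (∀ ν : Fin (d + 1), {s : Finset (Fin m) // s.card = ν.1 + 1}) =>
      Fmap x.1 x.2) := by
  rintro ⟨q, S⟩ ⟨q', S'⟩ h
  simp only at h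
  have hq : ∀ ν, q ν = q' ν := by
    intro ν
    have hcard : ((Fmap q S).filter (fun p => p.1 = q ν)).card = ν.1 + 1 := by
      rw [filter_Fmap, Finset.card_image_of_injective _ (fun a b hab => by
        simpa using (Prod.ext_iff.mp hab).2)]
      exact (S ν).2
    have hne : ((Fmap q S).filter (fun p => p.1 = q ν)).Nonempty := by
      rw [← Finset.card_pos, hcard]; omega
    obtain ⟨p, hp⟩ := hne
    rw [Finset.mem_filter] at hp
    have hp2 : p ∈ Fmap q' S' := by rw [← h]; exact hp.1
    obtain ⟨μ, hμ1, _⟩ := mem_Fmap.mp hp2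
    have hqq : q ν = q' μ := by rw [← hp.2, hμ1]
    -- counts: filter along q ν of both sides are equal
    have hfilt : ((Fmap q' S').filter (fun p => p.1 = q' μ)).card = μ.1 + 1 := by
      rw [filter_Fmap, Finset.card_image_of_injective _ (fun a b hab => by
        simpa using (Prod.ext_iff.mp hab).2)]
      exact (S' μ).2
    have : ν.1 + 1 = μ.1 + 1 := by
      rw [← hcard, ← hfilt, h, hqq]
    have : ν = μ := Fin.ext (by omega)
    rw [hqq, this]
  have hqe : q = q' := DFunLike.ext q q' hq
  subst hqe
  refine Prod.ext rfl (funext fun ν => Subtype.ext ?_)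
  have hfe : ((S ν : Finset (Fin m))).image (fun x => (q ν, x)) =
      ((S' ν : Finset (Fin m))).image (fun x => (q ν, x)) := by
    rw [← filter_Fmap q S ν, ← filter_Fmap q S' ν, h]
  exact Finset.image_injective (fun a b hab => by
    simpa using (Prod.ext_iff.mp hab).2) hfe

lemma Fmap_surjective (Q : Finset (Fin n × Fin m)) (hQ : IsEffective n m d Q) :
    ∃ x : (Fin (d + 1) ↪ Fin n) ×
        (∀ ν : Fin (d + 1), {s : Finset (Fin m) // s.card = ν.1 + 1}),
      Fmap x.1 x.2 = Q := by
  obtain ⟨f, hinj, hcard, hcov⟩ := hQ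
  refine ⟨⟨⟨f, hinj⟩, fun ν => ⟨(Q.filter (fun p => p.1 = f ν)).image Prod.snd, ?_⟩⟩, ?_⟩
  · rw [Finset.card_image_of_injOn, hcard ν]
    intro a ha b hb hab
    rw [Finset.mem_coe, Finset.mem_filter] at ha hb
    exact Prod.ext (by rw [ha.2, hb.2]) hab
  · ext p
    rw [mem_Fmap]
    constructor
    · rintro ⟨ν, h1, h2⟩
      simp only [Finset.mem_image, Finset.mem_filter] at h2
      obtain ⟨p', ⟨hp'Q, hp'1⟩, hp'2⟩ := h2
      have : p = p' := Prod.ext (h1.trans hp'1.symm) hp'2.symm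
      rwa [this]
    · intro hp
      obtain ⟨ν, hν⟩ := hcov p hp
      refine ⟨ν, hν, ?_⟩
      simp only [Finset.mem_image, Finset.mem_filter]
      exact ⟨p, ⟨hp, hν⟩, rfl⟩

end EffectiveAux

/-- The number of effective sets for parameters `n, m, d` equals
`∏_{i=0}^{d} (n-i) · C(m, d+1-i)`. -/
theorem stmt_5 (n m d : ℕ) :
    {Q : Finset (Fin n × Fin m) | IsEffective n m d Q}.ncard =
      ∏ i ∈ Finset.range (d + 1), (n - i) * Nat.choose m (d + 1 - i) := by
  classical
  have h1 : {Q : Finset (Fin n × Fin m) | IsEffective n m d Q}.ncard =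
      Fintype.card {Q : Finset (Fin n × Fin m) // IsEffective n m d Q} := by
    rw [Set.ncard_eq_toFinset_card', Set.toFinset_setOf]
    exact (Fintype.card_subtype _).symm
  rw [h1]
  have hbij : Function.Bijective
      (fun x : (Fin (d + 1) ↪ Fin n) ×
          (∀ ν : Fin (d + 1), {s : Finset (Fin m) // s.card = ν.1 + 1}) =>
        (⟨EffectiveAux.Fmap x.1 x.2, EffectiveAux.Fmap_effective x.1 x.2⟩ :
          {Q : Finset (Fin n × Fin m) // IsEffective n m d Q})) := by
    constructor
    · intro a b hab
      exact EffectiveAux.Fmap_injective (Subtype.ext_iff.mp hab)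
    · rintro ⟨Q, hQ⟩
      obtain ⟨x, hx⟩ := EffectiveAux.Fmap_surjective Q hQ
      exact ⟨x, Subtype.ext hx⟩
  rw [← Fintype.card_of_bijective hbij, Fintype.card_prod, Fintype.card_pi,
    Fintype.card_embedding_eq]
  simp only [Fintype.card_finset_len, Fintype.card_fin]
  rw [Finset.prod_mul_distrib, ← Nat.descFactorial_eq_prod_range]
  congr 1
  rw [Fin.prod_univ_eq_prod_range (fun ν => m.choose (ν + 1)), ← Finset.prod_range_reflect]
  apply Finset.prod_congr rfl
  intro i hi
  rw [Finset.mem_range] at hi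
  congr 1
  omega
end

section
/- If a tableau $T \subseteq \{1,\dots,n\}\times\{1,\dots,m\}$ does not contain the staircase $R_{d+1} = \{(i,j) : i+j \le d+2\}$ (where $d+1 \le \min(n,m)$), then $|T| \le \max\{f(k) : 1 \le k \le d+1\}$, where $f(x) = x^2 + (m-n-d-2)x + (n+1)(d+1) - m$. -/
/-- A subset `T` of the `n × m` grid `{1,…,n} × {1,…,m}` is a *tableau* if it is
downward-left closed. -/
def IsTableau (n m : ℕ) (T : Finset (ℕ × ℕ)) : Prop :=
  T ⊆ Finset.Icc 1 n ×ˢ Finset.Icc 1 m ∧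
    ∀ p ∈ T, ∀ k l : ℕ, 1 ≤ k → k ≤ p.1 → 1 ≤ l → l ≤ p.2 → (k, l) ∈ T

/-- The quadratic `f(x) = x² + (m-n-d-2)x + (n+1)(d+1) - m`. -/
def fQ (n m d : ℕ) (x : ℤ) : ℤ :=
  x ^ 2 + ((m : ℤ) - n - d - 2) * x + ((n : ℤ) + 1) * ((d : ℤ) + 1) - m

/-- `max { f(k) : 1 ≤ k ≤ d+1 }`. -/
def maxF (n m d : ℕ) : ℤ :=
  (Finset.Icc 1 (d + 1)).sup' (Finset.nonempty_Icc.mpr (by omega))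
    (fun k : ℕ => fQ n m d (k : ℤ))

/-- If a tableau `T` in the `n × m` grid does not contain the staircase
`R_{d+1} = {(i,j) : i+j ≤ d+2}` (with `d+1 ≤ min(n,m)`), then
`|T| ≤ max { f(k) : 1 ≤ k ≤ d+1 }`. -/
theorem stmt_7 (n m d : ℕ) (hn : d + 1 ≤ n) (hm : d + 1 ≤ m)
    (T : Finset (ℕ × ℕ)) (hT : IsTableau n m T)
    (hnotR : ¬ (Finset.Icc 1 n ×ˢ Finset.Icc 1 m).filter
      (fun p => p.1 + p.2 ≤ d + 2) ⊆ T) :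
    (T.card : ℤ) ≤ maxF n m d := by
  -- Extract a missing staircase point (i, j)
  rw [Finset.not_subset] at hnotR
  obtain ⟨⟨i, j⟩, hmem, hnot⟩ := hnotR
  simp only [Finset.mem_filter, Finset.mem_product, Finset.mem_Icc] at hmem
  obtain ⟨⟨⟨hi1, hin⟩, hj1, hjm⟩, hij⟩ := hmem
  -- T is contained in a union of two rectangles
  have hsub : T ⊆ (Finset.Icc 1 (i - 1) ×ˢ Finset.Icc 1 m) ∪
      (Finset.Icc i n ×ˢ Finset.Icc 1 (j - 1)) := by
    intro q hq
    have hgrid := hT.1 hq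
    simp only [Finset.mem_product, Finset.mem_Icc] at hgrid
    have hcannot : ¬ (i ≤ q.1 ∧ j ≤ q.2) := by
      rintro ⟨h1, h2⟩
      exact hnot (hT.2 q hq i j hi1 h1 hj1 h2)
    simp only [Finset.mem_union, Finset.mem_product, Finset.mem_Icc]
    omega
  have hcard : T.card ≤ (i - 1) * m + (n + 1 - i) * (j - 1) := by
    calc T.card ≤ ((Finset.Icc 1 (i - 1) ×ˢ Finset.Icc 1 m) ∪
        (Finset.Icc i n ×ˢ Finset.Icc 1 (j - 1))).card := Finset.card_le_card hsub
      _ ≤ (Finset.Icc 1 (i - 1) ×ˢ Finset.Icc 1 m).card +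
          (Finset.Icc i n ×ˢ Finset.Icc 1 (j - 1)).card := Finset.card_union_le _ _
      _ = (i - 1) * m + (n + 1 - i) * (j - 1) := by
          simp [Finset.card_product, Nat.card_Icc]
  have hiI : i ∈ Finset.Icc 1 (d + 1) := by
    simp only [Finset.mem_Icc]; omega
  have hle : fQ n m d (i : ℤ) ≤ maxF n m d :=
    Finset.le_sup' (fun k : ℕ => fQ n m d (k : ℤ)) hiI
  refine le_trans ?_ hle
  have : (T.card : ℤ) ≤ ((i : ℤ) - 1) * m + ((n : ℤ) + 1 - i) * ((j : ℤ) - 1) := by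
    calc (T.card : ℤ) ≤ ((i - 1) * m + (n + 1 - i) * (j - 1) : ℕ) := by exact_mod_cast hcard
      _ = ((i : ℤ) - 1) * m + ((n : ℤ) + 1 - i) * ((j : ℤ) - 1) := by
          have e1 : ((i - 1 : ℕ) : ℤ) = (i : ℤ) - 1 := by omega
          have e2 : ((n + 1 - i : ℕ) : ℤ) = (n : ℤ) + 1 - i := by omega
          have e3 : ((j - 1 : ℕ) : ℤ) = (j : ℤ) - 1 := by omega
          rw [Nat.cast_add, Nat.cast_mul, Nat.cast_mul, e1, e2, e3]
  refine le_trans this ?_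
  unfold fQ
  have h1 : (0 : ℤ) ≤ (n : ℤ) + 1 - i := by omega
  have h2 : (0 : ℤ) ≤ (d : ℤ) + 2 - i - j := by omega
  nlinarith [mul_nonneg h1 h2]
end

section
/- Contrapositive of the tableau bound: if a tableau $T \subseteq \{1,\dots,n\}\times\{1,\dots,m\}$ satisfies $|T| > \max\{f(k) : 1 \le k \le d+1\}$ with $f(x) = x^2 + (m-n-d-2)x + (n+1)(d+1) - m$ and $d+1 \le \min(n,m)$, then $T$ contains the staircase $R_{d+1} = \{(i,j) : i + j \le d+2\}$. -/
/-!
If the cell `(i, j)` of the staircase is missing from a tableau `T`, then so is the whole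
rectangle `[i, n] × [j, m]`, hence `|T| ≤ nm - (n + 1 - i)(m + 1 - j)`. Since `j ≤ d + 2 - i`,
this is at most `nm - (n + 1 - i)(m - d - 1 + i) = f(i)` with `1 ≤ i ≤ d + 1`.
-/

theorem IsTableau.card_add_card_rect_le {n m : ℕ} {T : Finset (ℕ × ℕ)} (hT : IsTableau n m T)
    {i j : ℕ} (hi : 1 ≤ i) (hj : 1 ≤ j) (hij : (i, j) ∉ T) :
    T.card + (n + 1 - i) * (m + 1 - j) ≤ n * m := by
  set rect := Finset.Icc i n ×ˢ Finset.Icc j m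
  have hdisj : Disjoint T rect := by
    refine Finset.disjoint_left.mpr fun q hqT hqR => hij ?_
    simp only [rect, Finset.mem_product, Finset.mem_Icc] at hqR
    exact hT.2 q hqT i j hi hqR.1.1 hj hqR.2.1
  have hrect : rect ⊆ Finset.Icc 1 n ×ˢ Finset.Icc 1 m :=
    Finset.product_subset_product (Finset.Icc_subset_Icc_left hi) (Finset.Icc_subset_Icc_left hj)
  calc T.card + (n + 1 - i) * (m + 1 - j) = (T ∪ rect).card := by
        simp [Finset.card_union_of_disjoint hdisj, rect]
    _ ≤ (Finset.Icc 1 n ×ˢ Finset.Icc 1 m).card :=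
        Finset.card_le_card (Finset.union_subset hT.1 hrect)
    _ = n * m := by simp

theorem fQ_eq_sub_mul (n m d : ℕ) (x : ℤ) :
    fQ n m d x = n * m - (n + 1 - x) * (m + 1 - (d + 2 - x)) := by
  unfold fQ; ring

theorem fQ_le_maxF {n m d k : ℕ} (hk1 : 1 ≤ k) (hkd : k ≤ d + 1) :
    fQ n m d k ≤ maxF n m d :=
  Finset.le_sup' (fun k : ℕ => fQ n m d k) (Finset.mem_Icc.mpr ⟨hk1, hkd⟩)

theorem stmt_8_general (n m d : ℕ)
    (T : Finset (ℕ × ℕ)) (hT : IsTableau n m T)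
    (hcard : maxF n m d < (T.card : ℤ)) :
    (Finset.Icc 1 n ×ˢ Finset.Icc 1 m).filter (fun p => p.1 + p.2 ≤ d + 2) ⊆ T := by
  rintro ⟨i, j⟩ hp
  by_contra hij
  simp only [Finset.mem_filter, Finset.mem_product, Finset.mem_Icc] at hp
  obtain ⟨⟨⟨hi1, hin⟩, hj1, hjm⟩, hsum⟩ := hp
  have hrect := hT.card_add_card_rect_le hi1 hj1 hij
  have hf := fQ_le_maxF (n := n) (m := m) hi1 (show i ≤ d + 1 by omega)
  rw [fQ_eq_sub_mul] at hf
  zify [show i ≤ n + 1 by omega, show j ≤ m + 1 by omega] at hrect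
  have hj : (j : ℤ) ≤ d + 2 - i := by omega
  nlinarith

/-- If a tableau `T` in the `n × m` grid satisfies
`|T| > max { f(k) : 1 ≤ k ≤ d+1 }` (with `d+1 ≤ min(n,m)`), then `T` contains the
staircase `R_{d+1} = {(i,j) : i+j ≤ d+2}`. -/
theorem stmt_8 (n m d : ℕ) (hn : d + 1 ≤ n) (hm : d + 1 ≤ m)
    (T : Finset (ℕ × ℕ)) (hT : IsTableau n m T)
    (hcard : maxF n m d < (T.card : ℤ)) :
    (Finset.Icc 1 n ×ˢ Finset.Icc 1 m).filter (fun p => p.1 + p.2 ≤ d + 2) ⊆ T :=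
  stmt_8_general n m d T hT hcard
end

section
/- If a tableau $T$ contains the staircase $R_{d+1} = \{(i,j) : i+j \le d+2\}$ and $|T| > (d+1)(d+2)/2$, then $T$ contains at least two distinct effective sets. -/
/-- A subset `Q` of the grid (rows indexed by `ℕ`) is *effective* if there are `d+1`
distinct rows `q 0, …, q d` such that `Q` meets row `q ν` in exactly `ν+1` points
and meets no other row. -/
def IsEffectiveN (d : ℕ) (Q : Finset (ℕ × ℕ)) : Prop :=
  ∃ q : Fin (d + 1) → ℕ, Function.Injective q ∧
    (∀ ν : Fin (d + 1), (Q.filter (fun p => p.1 = q ν)).card = ν.1 + 1) ∧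
    (∀ p ∈ Q, ∃ ν, p.1 = q ν)

/-!
The staircase is effective, with row `d + 1 - ν` holding `ν + 1` cells. Whether a set is
effective depends only on its row counts up to a permutation of the rows, so moving one cell of the
staircase either within its row or into a row holding one cell fewer gives a second effective set.
A tableau strictly larger than the staircase has a cell outside it, and being closed downwards and
to the left it then contains a cell that can be moved in: the cell just past the end of a row
`a ≤ d + 1`, or the first cell of an empty row `a > d + 1`, taking over the one cell of row `d + 1`.
-/

open Finset

section RowCard

variable {α β : Type*} [DecidableEq α] [DecidableEq β]

def rowCard (Q : Finset (α × β)) (r : α) : ℕ := (Q.filter fun p => p.1 = r).card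

omit [DecidableEq β] in
lemma exists_mem_of_rowCard_ne_zero {Q : Finset (α × β)} {r : α} (h : rowCard Q r ≠ 0) :
    ∃ p ∈ Q, p.1 = r := by
  obtain ⟨p, hp⟩ := card_ne_zero.mp h
  exact ⟨p, (mem_filter.mp hp).1, (mem_filter.mp hp).2⟩

lemma rowCard_insert {Q : Finset (α × β)} {x : α × β} (hx : x ∉ Q) (r : α) :
    rowCard (insert x Q) r = rowCard Q r + if x.1 = r then 1 else 0 := by
  unfold rowCard
  rw [filter_insert]
  split_ifs with hxr
  · exact card_insert_of_notMem fun h => hx (mem_filter.mp h).1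
  · rfl

lemma rowCard_erase_add {Q : Finset (α × β)} {y : α × β} (hy : y ∈ Q) (r : α) :
    rowCard (Q.erase y) r + (if y.1 = r then 1 else 0) = rowCard Q r := by
  unfold rowCard
  rw [filter_erase]
  split_ifs with hyr
  · exact card_erase_add_one (mem_filter.mpr ⟨hy, hyr⟩)
  · have hy' : y ∉ Q.filter fun p => p.1 = r := fun h => hyr (mem_filter.mp h).2
    rw [erase_eq_of_notMem hy', add_zero]

lemma rowCard_insert_erase {Q : Finset (α × β)} {x y : α × β} (hy : y ∈ Q) (hx : x ∉ Q)
    (hrow : x.1 = y.1 ∨ rowCard Q x.1 + 1 = rowCard Q y.1) (r : α) :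
    rowCard (insert x (Q.erase y)) r = rowCard Q (Equiv.swap x.1 y.1 r) := by
  have hins := rowCard_insert (Q := Q.erase y) (fun h => hx (mem_of_mem_erase h)) r
  have hera := rowCard_erase_add hy r
  rcases hrow with hxy | hrow
  · rw [hxy, Equiv.swap_self, Equiv.refl_apply]
    rw [hxy] at hins
    split_ifs at hins hera <;> omega
  · by_cases hxr : x.1 = r
    · subst hxr
      have hyx : y.1 ≠ x.1 := fun h => by rw [h] at hrow; omega
      rw [Equiv.swap_apply_left]
      rw [if_pos rfl] at hins
      rw [if_neg hyx] at hera
      omega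
    by_cases hyr : y.1 = r
    · subst hyr
      rw [Equiv.swap_apply_right]
      rw [if_neg hxr] at hins
      rw [if_pos rfl] at hera
      omega
    · rw [Equiv.swap_apply_of_ne_of_ne (Ne.symm hxr) (Ne.symm hyr)]
      rw [if_neg hxr] at hins
      rw [if_neg hyr] at hera
      omega

end RowCard

lemma IsEffectiveN.of_rowCard_eq_comp {d : ℕ} {Q Q' : Finset (ℕ × ℕ)} (hQ : IsEffectiveN d Q)
    (σ : Equiv.Perm ℕ) (h : ∀ r, rowCard Q' r = rowCard Q (σ r)) : IsEffectiveN d Q' := by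
  obtain ⟨q, hq, hcard, hrows⟩ := hQ
  refine ⟨σ.symm ∘ q, σ.symm.injective.comp hq, fun ν => ?_, fun p hp => ?_⟩
  · have := h (σ.symm (q ν))
    rw [Equiv.apply_symm_apply] at this
    exact this.trans (hcard ν)
  · have hp' : rowCard Q (σ p.1) ≠ 0 := by
      rw [← h]
      exact card_ne_zero.mpr ⟨p, mem_filter.mpr ⟨hp, rfl⟩⟩
    obtain ⟨p', hp'Q, hp'1⟩ := exists_mem_of_rowCard_ne_zero hp'
    obtain ⟨ν, hν⟩ := hrows p' hp'Q
    exact ⟨ν, by rw [Function.comp_apply, ← hν, hp'1, Equiv.symm_apply_apply]⟩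

lemma IsEffectiveN.insert_erase {d : ℕ} {Q : Finset (ℕ × ℕ)} {x y : ℕ × ℕ} (hQ : IsEffectiveN d Q)
    (hy : y ∈ Q) (hx : x ∉ Q) (hrow : x.1 = y.1 ∨ rowCard Q x.1 + 1 = rowCard Q y.1) :
    IsEffectiveN d (insert x (Q.erase y)) :=
  hQ.of_rowCard_eq_comp _ (rowCard_insert_erase hy hx hrow)

def staircase (d : ℕ) : Finset (ℕ × ℕ) :=
  (Icc 1 (d + 1) ×ˢ Icc 1 (d + 1)).filter fun p => p.1 + p.2 ≤ d + 2

lemma mem_staircase {d : ℕ} {p : ℕ × ℕ} :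
    p ∈ staircase d ↔ 1 ≤ p.1 ∧ 1 ≤ p.2 ∧ p.1 + p.2 ≤ d + 2 := by
  simp only [staircase, mem_filter, mem_product, mem_Icc]
  omega

lemma rowCard_staircase {d r : ℕ} (hr : 1 ≤ r) : rowCard (staircase d) r = d + 2 - r := by
  have : (staircase d).filter (fun p => p.1 = r) = {r} ×ˢ Icc 1 (d + 2 - r) := by
    ext ⟨i, j⟩
    simp only [mem_filter, mem_staircase, mem_product, mem_singleton, mem_Icc]
    omega
  rw [rowCard, this, card_product, card_singleton, Nat.card_Icc]
  omega

lemma rowCard_staircase_of_lt {d r : ℕ} (hr : d + 1 < r) : rowCard (staircase d) r = 0 := by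
  rw [rowCard_staircase (by omega)]
  omega

lemma card_staircase (d : ℕ) : (staircase d).card = (d + 1) * (d + 2) / 2 := by
  have hrows : ∀ p ∈ staircase d, p.1 ∈ Icc 1 (d + 1) := fun p hp => by
    rw [mem_staircase] at hp
    rw [mem_Icc]
    omega
  rw [card_eq_sum_card_fiberwise hrows]
  have hsum : ∑ r ∈ Icc 1 (d + 1), rowCard (staircase d) r = ∑ i ∈ range (d + 1), (i + 1) := by
    rw [← Ico_add_one_right_eq_Icc, sum_Ico_eq_sum_range, ← sum_range_reflect]
    refine sum_congr rfl fun i hi => ?_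
    rw [mem_range] at hi
    rw [rowCard_staircase (by omega)]
    omega
  have hgauss := sum_range_id_mul_two (d + 2)
  rw [sum_range_succ'] at hgauss
  have hprod : (d + 2) * (d + 2 - 1) = (d + 1) * (d + 2) := by rw [mul_comm]; rfl
  unfold rowCard at hsum
  omega

lemma isEffectiveN_staircase (d : ℕ) : IsEffectiveN d (staircase d) := by
  refine ⟨fun ν => d + 1 - ν.1, fun ν μ h => ?_, fun ν => ?_, fun p hp => ?_⟩
  · have h' : d + 1 - ν.1 = d + 1 - μ.1 := h
    exact Fin.ext (by omega)
  · have := ν.2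
    change rowCard (staircase d) (d + 1 - ν.1) = ν.1 + 1
    rw [rowCard_staircase (by omega)]
    omega
  · rw [mem_staircase] at hp
    exact ⟨⟨d + 1 - p.1, by omega⟩, by simp only; omega⟩

lemma exists_movable_cell {n m d : ℕ} {T : Finset (ℕ × ℕ)} (hT : IsTableau n m T) {p : ℕ × ℕ}
    (hpT : p ∈ T) (hpS : p ∉ staircase d) :
    ∃ x ∈ T, x ∉ staircase d ∧ ∃ y ∈ staircase d,
      x.1 = y.1 ∨ rowCard (staircase d) x.1 + 1 = rowCard (staircase d) y.1 := by
  obtain ⟨a, b⟩ := p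
  have hab := hT.1 hpT
  simp only [mem_product, mem_Icc] at hab
  rw [mem_staircase] at hpS
  by_cases ha : a ≤ d + 1
  · refine ⟨(a, d + 3 - a), hT.2 _ hpT a _ hab.1.1 le_rfl (by omega) (by simp only; omega),
      by rw [mem_staircase]; omega, (a, d + 2 - a), by rw [mem_staircase]; omega, Or.inl rfl⟩
  · refine ⟨(a, 1), hT.2 _ hpT a 1 hab.1.1 le_rfl le_rfl hab.2.1,
      by rw [mem_staircase]; omega, (d + 1, 1), by rw [mem_staircase]; omega, Or.inr ?_⟩
    rw [rowCard_staircase_of_lt (by omega), rowCard_staircase (by omega)]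
    omega

/-- If a tableau `T` contains the staircase
`R_{d+1} = {(i,j) : i+j ≤ d+2}` and `|T| > (d+1)(d+2)/2`, then `T` contains at
least two distinct effective sets. -/
theorem stmt_16 (n m d : ℕ) (hn : d + 1 ≤ n) (hm : d + 1 ≤ m)
    (T : Finset (ℕ × ℕ)) (hT : IsTableau n m T)
    (hR : (Finset.Icc 1 n ×ˢ Finset.Icc 1 m).filter
      (fun p => p.1 + p.2 ≤ d + 2) ⊆ T)
    (hcard : (d + 1) * (d + 2) / 2 < T.card) :
    ∃ Q₁ Q₂ : Finset (ℕ × ℕ), Q₁ ⊆ T ∧ Q₂ ⊆ T ∧ Q₁ ≠ Q₂ ∧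
      IsEffectiveN d Q₁ ∧ IsEffectiveN d Q₂ := by
  have hST : staircase d ⊆ T := fun p hp => hR <| by
    rw [mem_staircase] at hp
    simp only [mem_filter, mem_product, mem_Icc]
    omega
  obtain ⟨p, hpT, hpS⟩ := not_subset.mp fun hTS : T ⊆ staircase d => by
    have := card_le_card hTS
    rw [card_staircase] at this
    omega
  obtain ⟨x, hxT, hxS, y, hyS, hrow⟩ := exists_movable_cell hT hpT hpS
  exact ⟨staircase d, insert x ((staircase d).erase y), hST,
    insert_subset hxT ((erase_subset _ _).trans hST), fun h => hxS (h ▸ mem_insert_self _ _),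
    isEffectiveN_staircase d, (isEffectiveN_staircase d).insert_erase hyS hxS hrow⟩
end

section
/- Let $\{L_1,\dots,L_n, M_1,\dots,M_m\}$ be $n+m$ lines in general position over $\mathbb{F}_q$ (pairwise intersecting, no three concurrent) defined by linear forms $l_i, m_j$, and let $P_{ij} = L_i \cap M_j$. Suppose $\max\{f(k)\}$ is attained at $k = k_0$. Then the polynomial $p = \prod_{i=1}^{k_0-1} l_i \cdot \prod_{j=1}^{d+1-k_0} m_j$ has degree $d$, and its codeword $e(p) = (p(P_{ij}))_{i,j}$ has weight exactly $nm - \max\{f(k) : 1 \le k \le d+1\}$; i.e., the minimum distance bound is attained. -/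
/-!
The codeword of `p` vanishes at `P i j` exactly when `P i j` lies on one of the chosen lines.
Since no three lines are concurrent, `P i j` lies only on `L i` and `M j`, so `e(p)` is
supported on the grid `{i ≥ k₀ - 1} × {j ≥ d + 1 - k₀}` (indices from `0`), of size
`(n - k₀ + 1)(m - d - 1 + k₀) = nm - f(k₀)`. The degree is `d` because a product of `d`
affine forms with nonzero linear parts has degree `d` over a domain.
-/

open MvPolynomial Finset

theorem MvPolynomial.totalDegree_prod_of_isDomain {σ R ι : Type*} [CommRing R] [IsDomain R]
    (s : Finset ι) (f : ι → MvPolynomial σ R) (hf : ∀ i ∈ s, f i ≠ 0) :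
    (∏ i ∈ s, f i).totalDegree = ∑ i ∈ s, (f i).totalDegree := by
  classical
  induction s using Finset.induction_on with
  | empty => simp
  | insert i s hi ih =>
    rw [prod_insert hi, sum_insert hi, totalDegree_mul_of_isDomain (hf i (mem_insert_self i s))
      (prod_ne_zero_iff.mpr fun j hj => hf j (mem_insert_of_mem hj)),
      ih fun j hj => hf j (mem_insert_of_mem hj)]

theorem card_filter_notMem_and_notMem {α β : Type*} [Fintype α] [Fintype β] [DecidableEq α]
    [DecidableEq β] (s : Finset α) (t : Finset β) :
    #{q : α × β | q.1 ∉ s ∧ q.2 ∉ t} = (Fintype.card α - #s) * (Fintype.card β - #t) := by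
  rw [← card_compl, ← card_compl, ← card_product]
  congr 1
  ext
  simp

theorem mul_sub_fQ (n m d : ℕ) (k : ℤ) :
    (n * m : ℤ) - fQ n m d k = (n - (k - 1)) * (m - (d + 1 - k)) := by
  rw [fQ]; ring

section Lines

variable {F ι : Type*} [Field F]

noncomputable def lineForm (a b c : F) : MvPolynomial (Fin 2) F :=
  C a * X 0 + C b * X 1 + C c

@[simp]
theorem eval_lineForm (a b c : F) (p : F × F) :
    eval ![p.1, p.2] (lineForm a b c) = a * p.1 + b * p.2 + c := by
  simp [lineForm]

theorem totalDegree_lineForm {a b c : F} (hab : (a, b) ≠ (0, 0)) :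
    (lineForm a b c).totalDegree = 1 := by
  refine le_antisymm ?_ (Nat.one_le_iff_ne_zero.mpr fun h => hab ?_)
  · refine (totalDegree_add _ _).trans (max_le ((totalDegree_add _ _).trans (max_le ?_ ?_)) ?_)
    · exact (totalDegree_mul _ _).trans (by simp)
    · exact (totalDegree_mul _ _).trans (by simp)
    · simp
  · have he := totalDegree_eq_zero_iff_eq_C.mp h
    have h0 := congrArg (coeff (Finsupp.single 0 1)) he
    have h1 := congrArg (coeff (Finsupp.single 1 1)) he
    simp only [Fin.isValue, lineForm, coeff_add, coeff_C_mul, coeff_X, ↓reduceIte, mul_one,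
      Finsupp.single_eq_single_iff, one_ne_zero, and_true, and_self, or_self, mul_zero, add_zero,
      coeff_C, Finsupp.single_eq_zero, zero_add, add_eq_right, zero_ne_one] at h0 h1
    simp [h0, h1]

theorem lineForm_ne_zero {a b c : F} (hab : (a, b) ≠ (0, 0)) : lineForm a b c ≠ 0 := by
  intro h
  simpa [h] using totalDegree_lineForm (c := c) hab

theorem prod_lineForm_ne_zero {s : Finset ι} {a b : ι → F} (c : ι → F)
    (hab : ∀ i ∈ s, (a i, b i) ≠ (0, 0)) : ∏ i ∈ s, lineForm (a i) (b i) (c i) ≠ 0 :=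
  prod_ne_zero_iff.mpr fun i hi => lineForm_ne_zero (hab i hi)

theorem totalDegree_prod_lineForm {s : Finset ι} {a b : ι → F} (c : ι → F)
    (hab : ∀ i ∈ s, (a i, b i) ≠ (0, 0)) :
    (∏ i ∈ s, lineForm (a i) (b i) (c i)).totalDegree = #s := by
  rw [totalDegree_prod_of_isDomain _ _ fun i hi => lineForm_ne_zero (hab i hi),
    sum_congr rfl fun i hi => totalDegree_lineForm (hab i hi), card_eq_sum_ones]

theorem totalDegree_prod_lineForm_mul_prod_lineForm {κ : Type*} {s : Finset ι} {t : Finset κ}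
    {a b : ι → F} (c : ι → F) {a' b' : κ → F} (c' : κ → F)
    (hab : ∀ i ∈ s, (a i, b i) ≠ (0, 0)) (hab' : ∀ j ∈ t, (a' j, b' j) ≠ (0, 0)) :
    ((∏ i ∈ s, lineForm (a i) (b i) (c i)) *
      ∏ j ∈ t, lineForm (a' j) (b' j) (c' j)).totalDegree = #s + #t := by
  rw [totalDegree_mul_of_isDomain (prod_lineForm_ne_zero c hab) (prod_lineForm_ne_zero c' hab'),
    totalDegree_prod_lineForm c hab, totalDegree_prod_lineForm c' hab']

theorem eval_prod_lineForm_ne_zero_iff {s : Finset ι} {a b c : ι → F} {p : F × F} {i₀ : ι}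
    (hp : ∀ i, a i * p.1 + b i * p.2 + c i = 0 ↔ i = i₀) :
    eval ![p.1, p.2] (∏ i ∈ s, lineForm (a i) (b i) (c i)) ≠ 0 ↔ i₀ ∉ s := by
  simp [map_prod, prod_ne_zero_iff, hp]

theorem eq_or_eq_of_not_concurrent {a b c : ι → F}
    (hgen : ∀ i j k : ι, i ≠ j → i ≠ k → j ≠ k →
      ¬∃ p : F × F, a i * p.1 + b i * p.2 + c i = 0 ∧ a j * p.1 + b j * p.2 + c j = 0 ∧
        a k * p.1 + b k * p.2 + c k = 0)
    {p : F × F} {i j k : ι} (hij : i ≠ j) (hi : a i * p.1 + b i * p.2 + c i = 0)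
    (hj : a j * p.1 + b j * p.2 + c j = 0) (hk : a k * p.1 + b k * p.2 + c k = 0) :
    k = i ∨ k = j := by
  by_contra! h
  exact hgen i j k hij (Ne.symm h.1) (Ne.symm h.2) ⟨p, hi, hj, hk⟩

theorem eval_prod_lineForm_mul_prod_lineForm_ne_zero_iff {κ : Type*}
    {a b c : ι → F} {a' b' c' : κ → F}
    (hgen : ∀ i j k : ι ⊕ κ, i ≠ j → i ≠ k → j ≠ k →
      ¬∃ p : F × F,
        Sum.elim a a' i * p.1 + Sum.elim b b' i * p.2 + Sum.elim c c' i = 0 ∧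
        Sum.elim a a' j * p.1 + Sum.elim b b' j * p.2 + Sum.elim c c' j = 0 ∧
        Sum.elim a a' k * p.1 + Sum.elim b b' k * p.2 + Sum.elim c c' k = 0)
    {s : Finset ι} {t : Finset κ} {p : F × F} {i : ι} {j : κ}
    (hi : a i * p.1 + b i * p.2 + c i = 0) (hj : a' j * p.1 + b' j * p.2 + c' j = 0) :
    eval ![p.1, p.2] ((∏ i ∈ s, lineForm (a i) (b i) (c i)) *
      ∏ j ∈ t, lineForm (a' j) (b' j) (c' j)) ≠ 0 ↔ i ∉ s ∧ j ∉ t := by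
  have only_on (k : ι ⊕ κ) (hk : Sum.elim a a' k * p.1 + Sum.elim b b' k * p.2 +
      Sum.elim c c' k = 0) : k = .inl i ∨ k = .inr j :=
    eq_or_eq_of_not_concurrent hgen Sum.inl_ne_inr hi hj hk
  rw [map_mul, mul_ne_zero_iff,
    eval_prod_lineForm_ne_zero_iff fun i' => ⟨fun h => by simpa using only_on (.inl i') h,
      fun h => h ▸ hi⟩,
    eval_prod_lineForm_ne_zero_iff fun j' => ⟨fun h => by simpa using only_on (.inr j') h,
      fun h => h ▸ hj⟩]

end Lines
theorem stmt_18_general {F : Type*} [Field F] [DecidableEq F] (n m d : ℕ)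
    (hdn : d < n) (hdm : d < m)
    (a b c : Fin n → F) (a' b' c' : Fin m → F)
    (hab : ∀ i, (a i, b i) ≠ (0, 0)) (hab' : ∀ j, (a' j, b' j) ≠ (0, 0))
    (hgen : ∀ i j k : Fin n ⊕ Fin m, i ≠ j → i ≠ k → j ≠ k →
      ¬∃ p : F × F,
        Sum.elim a a' i * p.1 + Sum.elim b b' i * p.2 + Sum.elim c c' i = 0 ∧
        Sum.elim a a' j * p.1 + Sum.elim b b' j * p.2 + Sum.elim c c' j = 0 ∧
        Sum.elim a a' k * p.1 + Sum.elim b b' k * p.2 + Sum.elim c c' k = 0)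
    (P : Fin n → Fin m → F × F)
    (hP : ∀ i j, a i * (P i j).1 + b i * (P i j).2 + c i = 0 ∧
      a' j * (P i j).1 + b' j * (P i j).2 + c' j = 0)
    (k₀ : ℕ) (hk₀ : 1 ≤ k₀ ∧ k₀ ≤ d + 1) (hmax : fQ n m d (k₀ : ℤ) = maxF n m d) :
    (((∏ i : Fin n, if (i : ℕ) + 1 < k₀ then
          (MvPolynomial.C (a i) * MvPolynomial.X 0 + MvPolynomial.C (b i) *
            MvPolynomial.X 1 + MvPolynomial.C (c i)) else 1) *
        (∏ j : Fin m, if (j : ℕ) < d + 1 - k₀ then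
          (MvPolynomial.C (a' j) * MvPolynomial.X 0 + MvPolynomial.C (b' j) *
            MvPolynomial.X 1 + MvPolynomial.C (c' j)) else 1) :
        MvPolynomial (Fin 2) F).totalDegree = d) ∧
    (((Finset.univ.filter (fun q : Fin n × Fin m =>
        MvPolynomial.eval ![(P q.1 q.2).1, (P q.1 q.2).2]
          ((∏ i : Fin n, if (i : ℕ) + 1 < k₀ then
              (MvPolynomial.C (a i) * MvPolynomial.X 0 + MvPolynomial.C (b i) *
                MvPolynomial.X 1 + MvPolynomial.C (c i)) else 1) *
            (∏ j : Fin m, if (j : ℕ) < d + 1 - k₀ then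
              (MvPolynomial.C (a' j) * MvPolynomial.X 0 + MvPolynomial.C (b' j) *
                MvPolynomial.X 1 + MvPolynomial.C (c' j)) else 1)) ≠ 0)).card : ℤ) =
      (n * m : ℤ) - maxF n m d) := by
  simp only [← prod_filter, ← lineForm.eq_1]
  set S := ({i | (i : ℕ) + 1 < k₀} : Finset (Fin n))
  set T := ({j | (j : ℕ) < d + 1 - k₀} : Finset (Fin m))
  have hS : #S = k₀ - 1 := by
    simp only [S, Nat.add_lt_iff_lt_sub_right, Fin.card_filter_val_lt]; omega
  have hT : #T = d + 1 - k₀ := by rw [Fin.card_filter_val_lt]; omega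
  refine ⟨?_, ?_⟩
  · rw [totalDegree_prod_lineForm_mul_prod_lineForm c c' (fun i _ => hab i) (fun j _ => hab' j),
      hS, hT]
    omega
  · rw [filter_congr fun q _ =>
      eval_prod_lineForm_mul_prod_lineForm_ne_zero_iff hgen (hP q.1 q.2).1 (hP q.1 q.2).2,
      card_filter_notMem_and_notMem, Fintype.card_fin, Fintype.card_fin, hS, hT, ← hmax, mul_sub_fQ]
    push_cast [Nat.cast_sub (show k₀ - 1 ≤ n by omega), Nat.cast_sub (show d + 1 - k₀ ≤ m by omega),
      Nat.cast_sub hk₀.1, Nat.cast_sub hk₀.2]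
    ring

/-- For the configuration of `n + m` lines `L_i` (forms `l_i`, with
coefficients `a b c`) and `M_j` (forms `m_j`, coefficients `a' b' c'`) in general
position (pairwise meeting in exactly one point, no three concurrent), with
`P i j = L_i ∩ M_j`, and `k₀ ∈ {1,…,d+1}` attaining `max f(k)`, the polynomial
`p = ∏_{i=1}^{k₀-1} l_i · ∏_{j=1}^{d+1-k₀} m_j` has total degree `d` and its
codeword `e(p)` has weight exactly `nm - max{f(k) : 1 ≤ k ≤ d+1}`. -/
theorem stmt_18 {F : Type*} [Field F] [DecidableEq F] (n m d : ℕ)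
    (hdn : d < n) (hdm : d < m)
    (a b c : Fin n → F) (a' b' c' : Fin m → F)
    (hab : ∀ i, (a i, b i) ≠ (0, 0)) (hab' : ∀ j, (a' j, b' j) ≠ (0, 0))
    (hpair : ∀ i j : Fin n ⊕ Fin m, i ≠ j →
      ∃! p : F × F,
        Sum.elim a a' i * p.1 + Sum.elim b b' i * p.2 + Sum.elim c c' i = 0 ∧
        Sum.elim a a' j * p.1 + Sum.elim b b' j * p.2 + Sum.elim c c' j = 0)
    (hgen : ∀ i j k : Fin n ⊕ Fin m, i ≠ j → i ≠ k → j ≠ k →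
      ¬∃ p : F × F,
        Sum.elim a a' i * p.1 + Sum.elim b b' i * p.2 + Sum.elim c c' i = 0 ∧
        Sum.elim a a' j * p.1 + Sum.elim b b' j * p.2 + Sum.elim c c' j = 0 ∧
        Sum.elim a a' k * p.1 + Sum.elim b b' k * p.2 + Sum.elim c c' k = 0)
    (P : Fin n → Fin m → F × F)
    (hP : ∀ i j, a i * (P i j).1 + b i * (P i j).2 + c i = 0 ∧
      a' j * (P i j).1 + b' j * (P i j).2 + c' j = 0)
    (k₀ : ℕ) (hk₀ : 1 ≤ k₀ ∧ k₀ ≤ d + 1) (hmax : fQ n m d (k₀ : ℤ) = maxF n m d) :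
    (((∏ i : Fin n, if (i : ℕ) + 1 < k₀ then
          (MvPolynomial.C (a i) * MvPolynomial.X 0 + MvPolynomial.C (b i) *
            MvPolynomial.X 1 + MvPolynomial.C (c i)) else 1) *
        (∏ j : Fin m, if (j : ℕ) < d + 1 - k₀ then
          (MvPolynomial.C (a' j) * MvPolynomial.X 0 + MvPolynomial.C (b' j) *
            MvPolynomial.X 1 + MvPolynomial.C (c' j)) else 1) :
        MvPolynomial (Fin 2) F).totalDegree = d) ∧
    (((Finset.univ.filter (fun q : Fin n × Fin m =>
        MvPolynomial.eval ![(P q.1 q.2).1, (P q.1 q.2).2]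
          ((∏ i : Fin n, if (i : ℕ) + 1 < k₀ then
              (MvPolynomial.C (a i) * MvPolynomial.X 0 + MvPolynomial.C (b i) *
                MvPolynomial.X 1 + MvPolynomial.C (c i)) else 1) *
            (∏ j : Fin m, if (j : ℕ) < d + 1 - k₀ then
              (MvPolynomial.C (a' j) * MvPolynomial.X 0 + MvPolynomial.C (b' j) *
                MvPolynomial.X 1 + MvPolynomial.C (c' j)) else 1)) ≠ 0)).card : ℤ) =
      (n * m : ℤ) - maxF n m d) :=
  stmt_18_general n m d hdn hdm a b c a' b' c' hab hab' hgen P hP k₀ hk₀ hmax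
end
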